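/- arXiv:1412.3276 — 6 statements merged into one kernel-verified Lean document; each statement's English description precedes it below -/
import Mathlib

section
/- Let M and Π be finite sets and U : M × Π → ℝ. Then the mixed-strategy game has a value: max over distributions Q on Π of min over distributions ξ on M of ∑_{μ,π} ξ(μ) Q(π) U(μ, π) equals min over ξ of max over Q of the same expression (von Neumann minimax for this payoff matrix). -/
/-! If the lower value were strictly below the upper value, pick `c` strictly between them.
Either the point `(c, …, c)` lies in `U Δ + (-∞, 0]ᵐ`, which gives a column strategy securing at
least `c`, or it can be separated from that closed convex set; the separating functional has
nonnegative coefficients because the set is closed downwards, and after normalisation it is a row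
strategy holding the payoff strictly below `c`. Either way `c` is not strictly between. -/

open Set Pointwise Matrix

section Duality

variable {α β γ : Type*} [Nonempty α] [Nonempty β] {f : α → β → γ}

theorem ciSup_ciInf_le_ciInf_ciSup [ConditionallyCompleteLattice γ]
    (hb : ∀ b, BddBelow (range (f · b))) (ha : ∀ a, BddAbove (range (f a))) :
    ⨆ b, ⨅ a, f a b ≤ ⨅ a, ⨆ b, f a b :=
  ciSup_le fun b => le_ciInf fun a => (ciInf_le (hb b) a).trans (le_ciSup (ha a) b)

theorem ciSup_ciInf_eq_ciInf_ciSup_of_forall_or [ConditionallyCompleteLinearOrder γ]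
    [DenselyOrdered γ] (hb : ∀ b, BddBelow (range (f · b))) (ha : ∀ a, BddAbove (range (f a)))
    (h : ∀ c, (∃ b, ∀ a, c ≤ f a b) ∨ ∃ a, ∀ b, f a b ≤ c) :
    ⨆ b, ⨅ a, f a b = ⨅ a, ⨆ b, f a b := by
  refine (ciSup_ciInf_le_ciInf_ciSup hb ha).antisymm (le_of_not_gt fun hlt => ?_)
  obtain ⟨c, hc_lt, hlt_c⟩ := exists_between hlt
  have a₀ := Classical.arbitrary α
  have b₀ := Classical.arbitrary β
  rcases h c with ⟨b, hb_c⟩ | ⟨a, ha_c⟩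
  · have hbdd : BddAbove (range fun b => ⨅ a, f a b) :=
      ⟨⨆ b, f a₀ b, forall_mem_range.2 fun b => (ciInf_le (hb b) a₀).trans (le_ciSup (ha a₀) b)⟩
    exact hc_lt.not_ge ((le_ciInf hb_c).trans (le_ciSup hbdd b))
  · have hbdd : BddBelow (range fun a => ⨆ b, f a b) :=
      ⟨⨅ a, f a b₀, forall_mem_range.2 fun a => (ciInf_le (hb b₀) a).trans (le_ciSup (ha a) b₀)⟩
    exact hlt_c.not_ge ((ciInf_le hbdd a).trans (ciSup_le ha_c))

end Duality

section Simplex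

variable {ι : Type*} [Fintype ι]

theorem dotProduct_const_of_mem_stdSimplex {ξ : ι → ℝ} (hξ : ξ ∈ stdSimplex ℝ ι) (c : ℝ) :
    ξ ⬝ᵥ (fun _ => c) = c := by
  rw [dotProduct, ← Finset.sum_mul, hξ.2, one_mul]

theorem isCompact_range_comp_stdSimplex {g : (ι → ℝ) → ℝ} (hg : Continuous g) :
    IsCompact (range fun ξ : {ξ : ι → ℝ // (∀ i, 0 ≤ ξ i) ∧ ∑ i, ξ i = 1} => g ξ.1) := by
  rw [← Function.comp_def, range_comp, Subtype.range_coe_subtype]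
  exact (isCompact_stdSimplex ℝ ι).image hg

theorem exists_nonneg_dotProduct_lt_of_notMem_add_Iic {K : Set (ι → ℝ)} (hK : IsCompact K)
    (hKc : Convex ℝ K) (hne : K.Nonempty) {y : ι → ℝ} (hy : y ∉ K + Iic 0) :
    ∃ w, 0 ≤ w ∧ ∀ x ∈ K, w ⬝ᵥ x < w ⬝ᵥ y := by
  classical
  obtain ⟨f, u, hfS, hfy⟩ := geometric_hahn_banach_closed_point
    (hKc.add (convex_Iic 0)) (isClosed_Iic.add_left_of_isCompact hK) hy
  set e : ι → ι → ℝ := fun i j => if i = j then 1 else 0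
  set w : ι → ℝ := fun i => f (e i)
  have hf : ∀ x, f x = w ⬝ᵥ x := fun x => by
    rw [dotProduct_comm]
    exact f.toLinearMap.pi_apply_eq_sum_univ x
  have hfK : ∀ x ∈ K, f x < u := fun x hx => hfS x ⟨x, hx, 0, mem_Iic.2 le_rfl, add_zero x⟩
  refine ⟨w, fun i => ?_, fun x hx => hf x ▸ hf y ▸ (hfK x hx).trans hfy⟩
  obtain ⟨x₀, hx₀⟩ := hne
  by_contra! hwi
  rw [Pi.zero_apply] at hwi
  -- `f` decreases along the ray `x₀ - t • e i ⊆ K + Iic 0`, and reaches `u` at this `t`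
  set t := (u - f x₀) / -w i
  have ht : 0 ≤ t := div_nonneg (sub_nonneg.2 (hfK x₀ hx₀).le) (neg_nonneg.2 hwi.le)
  have hray : x₀ + -(t • e i) ∈ K + Iic 0 :=
    ⟨x₀, hx₀, _, fun j => neg_nonpos.2 (mul_nonneg ht (by positivity)), rfl⟩
  have hu : f (x₀ + -(t • e i)) = u := by
    have htw : t * w i = f x₀ - u := by
      rw [div_mul_eq_mul_div, div_neg, div_eq_mul_inv, mul_assoc, mul_inv_cancel₀ hwi.ne]
      ring
    rw [map_add, map_neg, map_smul, smul_eq_mul, htw]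
    ring
  exact (hfS _ hray).ne hu

theorem exists_mem_stdSimplex_dotProduct_lt_of_notMem_add_Iic {K : Set (ι → ℝ)}
    (hK : IsCompact K) (hKc : Convex ℝ K) (hne : K.Nonempty) {y : ι → ℝ} (hy : y ∉ K + Iic 0) :
    ∃ ξ ∈ stdSimplex ℝ ι, ∀ x ∈ K, ξ ⬝ᵥ x < ξ ⬝ᵥ y := by
  obtain ⟨w, hw, hwK⟩ := exists_nonneg_dotProduct_lt_of_notMem_add_Iic hK hKc hne hy
  have hs : 0 < ∑ i, w i := by
    refine (Finset.sum_nonneg fun i _ => hw i).lt_of_ne fun h => ?_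
    have hw0 : w = 0 := funext fun i =>
      (Finset.sum_eq_zero_iff_of_nonneg fun i _ => hw i).1 h.symm i (Finset.mem_univ i)
    obtain ⟨x₀, hx₀⟩ := hne
    simpa [hw0] using hwK x₀ hx₀
  refine ⟨(∑ i, w i)⁻¹ • w, ⟨fun i => mul_nonneg (inv_nonneg.2 hs.le) (hw i), ?_⟩, fun x hx => ?_⟩
  · simp only [Pi.smul_apply, smul_eq_mul, ← Finset.mul_sum, inv_mul_cancel₀ hs.ne']
  · simp only [smul_dotProduct, smul_eq_mul]
    exact mul_lt_mul_of_pos_left (hwK x hx) (inv_pos.2 hs)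

end Simplex

theorem exists_le_or_exists_lt_dotProduct_mulVec {m n : Type*} [Fintype m] [Fintype n]
    [Nonempty n] (U : Matrix m n ℝ) (c : ℝ) :
    (∃ Q ∈ stdSimplex ℝ n, ∀ ξ ∈ stdSimplex ℝ m, c ≤ ξ ⬝ᵥ U *ᵥ Q) ∨
    ∃ ξ ∈ stdSimplex ℝ m, ∀ Q ∈ stdSimplex ℝ n, ξ ⬝ᵥ U *ᵥ Q < c := by
  by_cases hc : (fun _ => c) ∈ U.mulVecLin '' stdSimplex ℝ n + Iic 0
  · obtain ⟨_, ⟨Q, hQ, rfl⟩, z, hz, hQz⟩ := hc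
    refine .inl ⟨Q, hQ, fun ξ hξ => ?_⟩
    rw [← dotProduct_const_of_mem_stdSimplex hξ c, ← hQz]
    exact dotProduct_le_dotProduct_of_nonneg_left (add_le_of_nonpos_right hz) hξ.1
  · obtain ⟨ξ, hξ, hlt⟩ := exists_mem_stdSimplex_dotProduct_lt_of_notMem_add_Iic
      ((isCompact_stdSimplex ℝ n).image U.mulVecLin.continuous_of_finiteDimensional)
      ((convex_stdSimplex ℝ n).linear_image _) ((nonempty_coe_sort.1 inferInstance).image _) hc
    exact .inr ⟨ξ, hξ, fun Q hQ => dotProduct_const_of_mem_stdSimplex hξ c ▸ hlt _ ⟨Q, hQ, rfl⟩⟩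

/-- von Neumann minimax theorem for the finite payoff matrix `U`:
the mixed-strategy game has a value, i.e. max over distributions `Q` on `Π` of the min over
distributions `ξ` on `M` of the bilinear payoff equals the min over `ξ` of the max over `Q`. -/
theorem stmt5 (M Pi : Type*) [Fintype M] [Fintype Pi] [Nonempty M] [Nonempty Pi]
    (U : M → Pi → ℝ) :
    (⨆ Q : {Q : Pi → ℝ // (∀ π, 0 ≤ Q π) ∧ ∑ π, Q π = 1},
      ⨅ ξ : {ξ : M → ℝ // (∀ μ, 0 ≤ ξ μ) ∧ ∑ μ, ξ μ = 1},
        ∑ μ, ∑ π, ξ.1 μ * Q.1 π * U μ π) =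
    (⨅ ξ : {ξ : M → ℝ // (∀ μ, 0 ≤ ξ μ) ∧ ∑ μ, ξ μ = 1},
      ⨆ Q : {Q : Pi → ℝ // (∀ π, 0 ≤ Q π) ∧ ∑ π, Q π = 1},
        ∑ μ, ∑ π, ξ.1 μ * Q.1 π * U μ π) := by
  have hpay (ξ : M → ℝ) (Q : Pi → ℝ) : ∑ μ, ∑ π, ξ μ * Q π * U μ π = ξ ⬝ᵥ U *ᵥ Q := by
    simp only [dotProduct, mulVec, Finset.mul_sum, mul_assoc, mul_comm (Q _)]
  simp only [hpay]
  have : Nonempty {ξ : M → ℝ // (∀ μ, 0 ≤ ξ μ) ∧ ∑ μ, ξ μ = 1} :=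
    inferInstanceAs (Nonempty (stdSimplex ℝ M))
  have : Nonempty {Q : Pi → ℝ // (∀ π, 0 ≤ Q π) ∧ ∑ π, Q π = 1} :=
    inferInstanceAs (Nonempty (stdSimplex ℝ Pi))
  refine ciSup_ciInf_eq_ciInf_ciSup_of_forall_or
    (fun Q => (isCompact_range_comp_stdSimplex (g := (· ⬝ᵥ U *ᵥ Q.1)) (by fun_prop)).bddBelow)
    (fun ξ => (isCompact_range_comp_stdSimplex (g := (ξ.1 ⬝ᵥ U *ᵥ ·)) (by fun_prop)).bddAbove) fun c => ?_
  rcases exists_le_or_exists_lt_dotProduct_mulVec U c with ⟨Q, hQ, hc⟩ | ⟨ξ, hξ, hc⟩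
  exacts [.inl ⟨⟨Q, hQ⟩, fun ξ => hc ξ.1 ξ.2⟩, .inr ⟨⟨ξ, hξ⟩, fun Q => (hc Q.1 Q.2).le⟩]
end

section
/- Consider the multiplicative weights algorithm with N experts: weights w_{i,1} = 1, and w_{i,k+1} = (1 + ℓ·u_{i,k}) w_{i,k}, where u_{i,k} ∈ [-1,1] is the reward of expert i in round k and 0 < ℓ ≤ 1/2. Let Q_k be the normalized weight distribution and V_K = ∑_{k=1}^K ∑_i Q_k(i) u_{i,k}. Then for every expert j: V_K ≥ ∑_{k=1}^K u_{j,k} − ℓ ∑_{k=1}^K |u_{j,k}| − (ln N)/ℓ. -/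
/-!
The total weight `W_k = ∑ᵢ w_{i,k}` is a potential: one round multiplies it by `1 + ℓ·v_k`,
where `v_k = ∑ᵢ Q_k(i) u_{i,k}` is the algorithm's reward, so `W_K ≤ N · exp(ℓ V_K)` since
`1 + y ≤ eʸ`. On the other hand `1 + x ≥ exp(x - x²)` for `x ≥ -1/2`, so the weight of any single
expert satisfies `w_{j,K} ≥ exp(ℓ ∑ₖ u_{j,k} - ℓ² ∑ₖ |u_{j,k}|)`. Comparing via `w_{j,K} ≤ W_K`
and taking logarithms gives the bound.
-/

open Finset Real

theorem Real.exp_sub_sq_le_one_add {x : ℝ} (hx : -(1 / 2) ≤ x) : exp (x - x ^ 2) ≤ 1 + x := by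
  have hx1 : 0 < 1 + x := by linarith
  rcases le_total 0 x with hx0 | hx0
  · rw [← le_log_iff_exp_le hx1]
    refine le_trans ?_ (le_log_one_add_of_nonneg hx0)
    rw [le_div_iff₀ (by linarith)]
    nlinarith [pow_nonneg hx0 3]
  · set s := x ^ 2 - x with hs
    have hs0 : 0 ≤ s := by nlinarith
    have hexp : exp (x - x ^ 2) * exp s = 1 := by rw [← exp_add, hs]; simp
    have key : 1 ≤ (1 + x) * (1 + s + s ^ 2 / 2) := by
      have ht : 0 ≤ -x := neg_nonneg.mpr hx0
      rw [hs]
      nlinarith [mul_nonneg (mul_nonneg ht ht) ht, mul_nonneg (mul_nonneg (mul_nonneg ht ht) ht) ht]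
    calc exp (x - x ^ 2)
        ≤ exp (x - x ^ 2) * ((1 + x) * (1 + s + s ^ 2 / 2)) :=
          le_mul_of_one_le_right (exp_pos _).le key
      _ = (1 + x) * (exp (x - x ^ 2) * (1 + s + s ^ 2 / 2)) := by ring
      _ ≤ (1 + x) * (exp (x - x ^ 2) * exp s) := by
          gcongr; exact quadratic_le_exp_of_nonneg hs0
      _ = 1 + x := by rw [hexp, mul_one]

theorem neg_half_le_mul_of_abs_le_one {ℓ a : ℝ} (hℓ0 : 0 ≤ ℓ) (hℓ : ℓ ≤ 1 / 2)
    (ha : |a| ≤ 1) : -(1 / 2) ≤ ℓ * a := by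
  nlinarith [neg_abs_le a]

theorem exp_mul_sub_sq_mul_abs_le_one_add_mul {ℓ a : ℝ} (hℓ0 : 0 ≤ ℓ)
    (hℓ : ℓ ≤ 1 / 2) (ha : |a| ≤ 1) : exp (ℓ * a - ℓ ^ 2 * |a|) ≤ 1 + ℓ * a := by
  have hsq : (ℓ * a) ^ 2 ≤ ℓ ^ 2 * |a| := by
    rw [mul_pow, ← sq_abs a]
    gcongr
    nlinarith [abs_nonneg a]
  calc exp (ℓ * a - ℓ ^ 2 * |a|) ≤ exp (ℓ * a - (ℓ * a) ^ 2) := by gcongr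
    _ ≤ 1 + ℓ * a := exp_sub_sq_le_one_add (neg_half_le_mul_of_abs_le_one hℓ0 hℓ ha)

theorem le_mul_exp_sum_of_le_mul_exp {f a : ℕ → ℝ} (h : ∀ k, f (k + 1) ≤ f k * exp (a k))
    (K : ℕ) : f K ≤ f 0 * exp (∑ k ∈ range K, a k) := by
  induction K with
  | zero => simp
  | succ K ih =>
    rw [sum_range_succ, exp_add, ← mul_assoc]
    exact (h K).trans (mul_le_mul_of_nonneg_right ih (exp_pos _).le)

theorem mul_exp_sum_le_of_mul_exp_le {f a : ℕ → ℝ} (h : ∀ k, f k * exp (a k) ≤ f (k + 1))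
    (K : ℕ) : f 0 * exp (∑ k ∈ range K, a k) ≤ f K := by
  induction K with
  | zero => simp
  | succ K ih =>
    rw [sum_range_succ, exp_add, ← mul_assoc]
    exact (mul_le_mul_of_nonneg_right ih (exp_pos _).le).trans (h K)

theorem sum_one_add_mul_mul_eq {ι : Type*} [Fintype ι] (ℓ : ℝ) (u w : ι → ℝ)
    (hw : ∑ i, w i ≠ 0) :
    ∑ i, (1 + ℓ * u i) * w i = (∑ i, w i) * (1 + ℓ * ∑ i, w i / (∑ i', w i') * u i) := by
  simp only [add_mul, one_mul, sum_add_distrib, mul_add, mul_one, mul_sum]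
  congr 1
  refine sum_congr rfl fun i _ => ?_
  field_simp

theorem multiplicative_weights_pos {ι : Type*} {ℓ : ℝ} {u w : ℕ → ι → ℝ}
    (hu : ∀ k i, 0 < 1 + ℓ * u k i) (hw0 : ∀ i, w 0 i = 1)
    (hwsucc : ∀ k i, w (k + 1) i = (1 + ℓ * u k i) * w k i) (k : ℕ) (i : ι) : 0 < w k i := by
  induction k with
  | zero => simp [hw0]
  | succ k ih => rw [hwsucc]; exact mul_pos (hu k i) ih

theorem multiplicative_weights_regret {ι : Type*} [Fintype ι] {ℓ : ℝ} (hℓ0 : 0 ≤ ℓ)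
    (hℓ : ℓ ≤ 1 / 2) {u w : ℕ → ι → ℝ} (hu : ∀ k i, |u k i| ≤ 1) (hw0 : ∀ i, w 0 i = 1)
    (hwsucc : ∀ k i, w (k + 1) i = (1 + ℓ * u k i) * w k i) (K : ℕ) (j : ι) :
    ℓ * ∑ k ∈ range K, u k j - ℓ ^ 2 * ∑ k ∈ range K, |u k j| ≤
      log (Fintype.card ι) + ℓ * ∑ k ∈ range K, ∑ i, w k i / (∑ i', w k i') * u k i := by
  have hw : ∀ k i, 0 < w k i := multiplicative_weights_pos
    (fun k i => by linarith [neg_half_le_mul_of_abs_le_one hℓ0 hℓ (hu k i)]) hw0 hwsucc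
  have hW : ∀ k, 0 < ∑ i, w k i := fun k => sum_pos (fun i _ => hw k i) ⟨j, mem_univ j⟩
  have lower : exp (ℓ * ∑ k ∈ range K, u k j - ℓ ^ 2 * ∑ k ∈ range K, |u k j|) ≤ w K j := by
    have hstep := mul_exp_sum_le_of_mul_exp_le (f := fun k => w k j)
      (a := fun k => ℓ * u k j - ℓ ^ 2 * |u k j|) (fun k => by
        rw [hwsucc, mul_comm]
        exact mul_le_mul_of_nonneg_right
          (exp_mul_sub_sq_mul_abs_le_one_add_mul hℓ0 hℓ (hu k j)) (hw k j).le) K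
    simpa [hw0, mul_sum, sum_sub_distrib] using hstep
  have upper : ∑ i, w K i ≤ Fintype.card ι *
      exp (ℓ * ∑ k ∈ range K, ∑ i, w k i / (∑ i', w k i') * u k i) := by
    have hstep := le_mul_exp_sum_of_le_mul_exp (f := fun k => ∑ i, w k i)
      (a := fun k => ℓ * ∑ i, w k i / (∑ i', w k i') * u k i) (fun k => by
        simp only [hwsucc]
        rw [sum_one_add_mul_mul_eq ℓ (u k) (w k) (hW k).ne', add_comm]
        exact mul_le_mul_of_nonneg_left (add_one_le_exp _) (hW k).le) K
    simpa [hw0, mul_sum] using hstep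
  have hcard : (0 : ℝ) < Fintype.card ι := by exact_mod_cast Fintype.card_pos_iff.mpr ⟨j⟩
  have hchain := (lower.trans (single_le_sum (fun i _ => (hw K i).le) (mem_univ j))).trans upper
  rwa [← le_log_iff_exp_le (by positivity), log_mul hcard.ne' (exp_pos _).ne', log_exp] at hchain

theorem stmt9_general (N : ℕ) (ℓ : ℝ) (hℓ0 : 0 < ℓ) (hℓ : ℓ ≤ 1 / 2)
    (u : ℕ → Fin N → ℝ) (hu : ∀ k i, u k i ∈ Set.Icc (-1 : ℝ) 1)
    (w : ℕ → Fin N → ℝ)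
    (hw0 : ∀ i, w 0 i = 1)
    (hwsucc : ∀ k i, w (k + 1) i = (1 + ℓ * u k i) * w k i)
    (Q : ℕ → Fin N → ℝ) (hQ : ∀ k i, Q k i = w k i / ∑ j, w k j)
    (K : ℕ) (j : Fin N) :
    (∑ k ∈ Finset.range K, ∑ i, Q k i * u k i) ≥
      (∑ k ∈ Finset.range K, u k j) - ℓ * (∑ k ∈ Finset.range K, |u k j|)
        - Real.log N / ℓ := by
  have regret := multiplicative_weights_regret hℓ0.le hℓ (fun k i => abs_le.mpr (hu k i))
    hw0 hwsucc K j
  simp only [← hQ, Fintype.card_fin] at regret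
  have hrhs : (∑ k ∈ range K, u k j) - ℓ * (∑ k ∈ range K, |u k j|) - log N / ℓ =
      (ℓ * ∑ k ∈ range K, u k j - ℓ ^ 2 * ∑ k ∈ range K, |u k j| - log N) / ℓ := by
    field_simp
  rw [ge_iff_le, hrhs, div_le_iff₀ hℓ0]
  linarith

/-- Multiplicative weights with `N` experts, weights `w_{i,1} = 1`,
`w_{i,k+1} = (1 + ℓ u_{i,k}) w_{i,k}`, rewards `u_{i,k} ∈ [-1,1]`, `0 < ℓ ≤ 1/2`.
With `Q_k` the normalized weights and `V_K = ∑_k ∑_i Q_k(i) u_{i,k}`, for every expert `j`: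
`V_K ≥ ∑_k u_{j,k} − ℓ ∑_k |u_{j,k}| − (ln N)/ℓ`. -/
theorem stmt9 (N : ℕ) (hN : 1 ≤ N) (ℓ : ℝ) (hℓ0 : 0 < ℓ) (hℓ : ℓ ≤ 1 / 2)
    (u : ℕ → Fin N → ℝ) (hu : ∀ k i, u k i ∈ Set.Icc (-1 : ℝ) 1)
    (w : ℕ → Fin N → ℝ)
    (hw0 : ∀ i, w 0 i = 1)
    (hwsucc : ∀ k i, w (k + 1) i = (1 + ℓ * u k i) * w k i)
    (Q : ℕ → Fin N → ℝ) (hQ : ∀ k i, Q k i = w k i / ∑ j, w k j)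
    (K : ℕ) (j : Fin N) :
    (∑ k ∈ Finset.range K, ∑ i, Q k i * u k i) ≥
      (∑ k ∈ Finset.range K, u k j) - ℓ * (∑ k ∈ Finset.range K, |u k j|)
        - Real.log N / ℓ :=
  stmt9_general N ℓ hℓ0 hℓ u hu w hw0 hwsucc Q hQ K j
end

section
/- Under the same multiplicative-weights setup with rewards in [-1,1] and 0 < ℓ ≤ 1/2, for every probability distribution P on the N experts: ∑_{k=1}^K ∑_i Q_k(i) u_{i,k} ≥ ∑_{k=1}^K ∑_i P(i)(u_{i,k} − ℓ|u_{i,k}|) − (ln N)/ℓ. -/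
/-!
The potential `Φ_k = log ∑_i w_{i,k}` increases in step `k` by `log (1 + ℓ ⟨Q_k, u_k⟩)`, which is
at most `ℓ ⟨Q_k, u_k⟩`, and starts at `Φ_0 = log N`. On the other hand `Φ_K` dominates every
`log w_{i,K} = ∑_k log (1 + ℓ u_{i,k})`, hence their `P`-average, and `log (1 + x) ≥ x - x²` for
`|x| ≤ 1/2` bounds each term below by `ℓ (u_{i,k} - ℓ |u_{i,k}|)`.
-/

open Finset Real

namespace Real

lemma abs_log_one_add_sub_self_le {x : ℝ} (hx : |x| < 1) :
    |log (1 + x) - x| ≤ x ^ 2 * (1 - |x|)⁻¹ / 2 := by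
  have hpos : 0 ≤ 1 + x := by linarith [neg_abs_le x]
  have h := Complex.norm_log_one_add_sub_self_le (z := x) (by simpa using hx)
  rwa [← Complex.ofReal_one, ← Complex.ofReal_add, ← Complex.ofReal_log hpos,
    ← Complex.ofReal_sub, Complex.norm_real, Complex.norm_real, norm_eq_abs, norm_eq_abs,
    sq_abs] at h

lemma sub_sq_le_log_one_add {x : ℝ} (hx : |x| ≤ 1 / 2) : x - x ^ 2 ≤ log (1 + x) := by
  have hx1 : |x| < 1 := hx.trans_lt (by norm_num)
  have hinv : (1 - |x|)⁻¹ ≤ 2 := by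
    rw [inv_le_comm₀ (by linarith) two_pos]
    linarith
  have h := (abs_le.mp (abs_log_one_add_sub_self_le hx1)).1
  nlinarith [sq_nonneg x]

end Real

lemma mul_sub_mul_abs_le_log_one_add_mul {ℓ u : ℝ} (hℓ0 : 0 ≤ ℓ) (hℓ : ℓ ≤ 1 / 2)
    (hu : |u| ≤ 1) : ℓ * (u - ℓ * |u|) ≤ log (1 + ℓ * u) := by
  have hℓu : |ℓ * u| ≤ 1 / 2 := by
    rw [abs_mul, abs_of_nonneg hℓ0]
    nlinarith [abs_nonneg u]
  have hsq : u ^ 2 ≤ |u| := by nlinarith [sq_abs u, abs_nonneg u]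
  have := sub_sq_le_log_one_add hℓu
  nlinarith [mul_le_mul_of_nonneg_left hsq (sq_nonneg ℓ)]

lemma one_add_mul_pos {ℓ u : ℝ} (hℓ0 : 0 ≤ ℓ) (hℓ : ℓ ≤ 1 / 2) (hu : |u| ≤ 1) :
    0 < 1 + ℓ * u := by
  nlinarith [abs_le.mp hu, mul_le_mul_of_nonneg_left (abs_le.mp hu).1 hℓ0]

lemma mul_sum_sub_mul_abs_le_log_prod {κ : Type*} {s : Finset κ} {ℓ : ℝ} {u : κ → ℝ}
    (hℓ0 : 0 ≤ ℓ) (hℓ : ℓ ≤ 1 / 2) (hu : ∀ k, |u k| ≤ 1) :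
    ℓ * ∑ k ∈ s, (u k - ℓ * |u k|) ≤ log (∏ k ∈ s, (1 + ℓ * u k)) := by
  rw [log_prod fun k _ => (one_add_mul_pos hℓ0 hℓ (hu k)).ne', mul_sum]
  exact sum_le_sum fun k _ => mul_sub_mul_abs_le_log_one_add_mul hℓ0 hℓ (hu k)

section Potential

variable {ι : Type*} [Fintype ι]

lemma log_sum_mul_one_add_sub_log_sum_le [Nonempty ι] {ℓ : ℝ} {w r : ι → ℝ}
    (hw : ∀ i, 0 < w i) (hr : ∀ i, 0 < 1 + ℓ * r i) :
    log (∑ i, (1 + ℓ * r i) * w i) - log (∑ i, w i) ≤ ℓ * ∑ i, w i / (∑ j, w j) * r i := by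
  set W := ∑ i, w i
  have hW : 0 < W := sum_pos (fun i _ => hw i) univ_nonempty
  have hA : 0 < ∑ i, (1 + ℓ * r i) * w i :=
    sum_pos (fun i _ => mul_pos (hr i) (hw i)) univ_nonempty
  have hratio : (∑ i, (1 + ℓ * r i) * w i) / W = 1 + ℓ * ∑ i, w i / W * r i := by
    rw [div_eq_iff hW.ne', add_mul, one_mul, mul_assoc, sum_mul, mul_sum]
    simp only [add_mul, one_mul, sum_add_distrib]
    congr 1
    exact sum_congr rfl fun i _ => by field_simp
  calc log (∑ i, (1 + ℓ * r i) * w i) - log W = log ((∑ i, (1 + ℓ * r i) * w i) / W) :=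
        (log_div hA.ne' hW.ne').symm
    _ ≤ (∑ i, (1 + ℓ * r i) * w i) / W - 1 := log_le_sub_one_of_pos (div_pos hA hW)
    _ = ℓ * ∑ i, w i / W * r i := by rw [hratio]; ring

lemma sum_mul_log_le_log_sum {P w : ι → ℝ} (hP0 : ∀ i, 0 ≤ P i) (hP1 : ∑ i, P i = 1)
    (hw : ∀ i, 0 < w i) : ∑ i, P i * log (w i) ≤ log (∑ i, w i) :=
  calc ∑ i, P i * log (w i) ≤ ∑ i, P i * log (∑ j, w j) := by
        gcongr with i
        · exact hP0 i
        · exact hw i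
        · exact single_le_sum (fun j _ => (hw j).le) (mem_univ i)
    _ = log (∑ i, w i) := by rw [← sum_mul, hP1, one_mul]

end Potential

/-- Multiplicative weights guarantee against any fixed distribution `P` on the
experts: `∑_k ∑_i Q_k(i) u_{i,k} ≥ ∑_k ∑_i P(i)(u_{i,k} − ℓ|u_{i,k}|) − (ln N)/ℓ`. -/
theorem stmt10 (N : ℕ) (hN : 1 ≤ N) (ℓ : ℝ) (hℓ0 : 0 < ℓ) (hℓ : ℓ ≤ 1 / 2)
    (u : ℕ → Fin N → ℝ) (hu : ∀ k i, u k i ∈ Set.Icc (-1 : ℝ) 1)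
    (w : ℕ → Fin N → ℝ)
    (hw0 : ∀ i, w 0 i = 1)
    (hwsucc : ∀ k i, w (k + 1) i = (1 + ℓ * u k i) * w k i)
    (Q : ℕ → Fin N → ℝ) (hQ : ∀ k i, Q k i = w k i / ∑ j, w k j)
    (K : ℕ) (P : Fin N → ℝ) (hP0 : ∀ i, 0 ≤ P i) (hP1 : ∑ i, P i = 1) :
    (∑ k ∈ Finset.range K, ∑ i, Q k i * u k i) ≥
      (∑ k ∈ Finset.range K, ∑ i, P i * (u k i - ℓ * |u k i|))
        - Real.log N / ℓ := by
  have : Nonempty (Fin N) := Fin.pos_iff_nonempty.mp hN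
  have hu1 : ∀ k i, |u k i| ≤ 1 := fun k i => abs_le.mpr (hu k i)
  have hprod : ∀ k i, w k i = ∏ j ∈ range k, (1 + ℓ * u j i) := fun k i =>
    (prod_range_induction _ (w · i) (hw0 i) k fun j _ => by rw [hwsucc, mul_comm]).symm
  have hfac : ∀ k i, 0 < 1 + ℓ * u k i := fun k i => one_add_mul_pos hℓ0.le hℓ (hu1 k i)
  have hwpos : ∀ k i, 0 < w k i := fun k i => by
    rw [hprod]; exact prod_pos fun j _ => hfac j i
  have hupper : log (∑ i, w K i) - log N ≤ ℓ * ∑ k ∈ range K, ∑ i, Q k i * u k i := by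
    rw [show (N : ℝ) = ∑ i, w 0 i by simp [hw0], ← sum_range_sub (fun k => log (∑ i, w k i)),
      mul_sum]
    refine sum_le_sum fun k _ => ?_
    simp only [hwsucc, hQ]
    exact log_sum_mul_one_add_sub_log_sum_le (hwpos k) (hfac k)
  have hlower : ℓ * ∑ k ∈ range K, ∑ i, P i * (u k i - ℓ * |u k i|) ≤ log (∑ i, w K i) :=
    calc ℓ * ∑ k ∈ range K, ∑ i, P i * (u k i - ℓ * |u k i|)
        = ∑ i, P i * (ℓ * ∑ k ∈ range K, (u k i - ℓ * |u k i|)) := by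
          simp only [sum_comm (s := range K), mul_sum]
          ring_nf
      _ ≤ ∑ i, P i * log (w K i) := by
          gcongr with i
          · exact hP0 i
          · rw [hprod]; exact mul_sum_sub_mul_abs_le_log_prod hℓ0.le hℓ (hu1 · i)
      _ ≤ log (∑ i, w K i) := sum_mul_log_le_log_sum hP0 hP1 (hwpos K)
  rw [ge_iff_le, sub_le_iff_le_add, ← sub_le_iff_le_add', le_div_iff₀ hℓ0]
  linarith
end

section
/- For the multiplicative weights algorithm with rewards in [-1,1], run for K rounds with learning rate ℓ = √(ln N / K) (assuming K ≥ 4 ln N so that ℓ ≤ 1/2), the regret against any fixed distribution P satisfies ∑_{k=1}^K ∑_i P(i) u_{i,k} − ∑_{k=1}^K ∑_i Q_k(i) u_{i,k} ≤ 2√(K ln N). -/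
/-!
Squeeze the potential `log ∑ᵢ w_K(i)`. Each round multiplies the total weight by
`1 + ℓ⟨Q_k, u_k⟩ ≤ exp (ℓ⟨Q_k, u_k⟩)`, so the potential is at most `log N + ℓ ∑ₖ ⟨Q_k, u_k⟩`.
It is at least `log w_K(i) ≥ ℓ ∑ₖ u_k(i) - ℓ²K` for every expert `i`, by
`log (1 + y) ≥ y - y²` for `y ≥ -1/2`; averaging over `P` gives `ℓ · regret ≤ log N + ℓ²K`,
and `ℓ = √(log N / K)` balances the two terms.
-/

open Finset Real

lemma Real.sub_sq_le_log_one_add_s11 {y : ℝ} (hy : -(1 / 2) ≤ y) : y - y ^ 2 ≤ log (1 + y) := by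
  rcases le_total 0 y with hy0 | hy0
  · have hinv : (1 + y)⁻¹ ≤ 1 - y + y ^ 2 := by
      rw [inv_le_iff_one_le_mul₀ (by linarith)]
      nlinarith [pow_nonneg hy0 3]
    linarith [one_sub_inv_le_log_of_pos (by linarith : 0 < 1 + y)]
  · -- here `log x ≥ 1 - x⁻¹` is too weak at third order; use `exp t ≥ 1 + t + t²/2` instead
    rw [le_log_iff_exp_le (by linarith)]
    have hexp := quadratic_le_exp_of_nonneg (x := y ^ 2 - y) (by nlinarith)
    have hexp_mul : exp (y - y ^ 2) * exp (y ^ 2 - y) = 1 := by rw [← exp_add]; simp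
    have hpoly : 1 ≤ (1 + y) * (1 + (y ^ 2 - y) + (y ^ 2 - y) ^ 2 / 2) := by
      have hcubic : 0 ≤ y ^ 2 * (-y * (1 + 2 * y)) :=
        mul_nonneg (sq_nonneg y) (mul_nonneg (neg_nonneg.mpr hy0) (by linarith))
      nlinarith [mul_nonneg (sq_nonneg y) (sq_nonneg y)]
    nlinarith [exp_pos (y - y ^ 2), exp_pos (y ^ 2 - y)]

namespace MultiplicativeWeights

variable {ι : Type*} {ℓ : ℝ} {u w Q : ℕ → ι → ℝ}

lemma weight_pos (hstep : ∀ k i, 0 < 1 + ℓ * u k i) (hw0 : ∀ i, w 0 i = 1)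
    (hwsucc : ∀ k i, w (k + 1) i = (1 + ℓ * u k i) * w k i) (k : ℕ) (i : ι) : 0 < w k i := by
  induction k with
  | zero => simp [hw0]
  | succ k ih => rw [hwsucc]; exact mul_pos (hstep k i) ih

lemma mul_sum_sub_le_log_weight (hℓ0 : 0 ≤ ℓ) (hℓ : ℓ ≤ 1 / 2)
    (hu : ∀ k i, u k i ∈ Set.Icc (-1 : ℝ) 1) (hw0 : ∀ i, w 0 i = 1)
    (hwsucc : ∀ k i, w (k + 1) i = (1 + ℓ * u k i) * w k i) (k : ℕ) (i : ι) :
    ℓ * ∑ j ∈ range k, u j i - ℓ ^ 2 * k ≤ log (w k i) := by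
  have hstep : ∀ k i, -(1 / 2) ≤ ℓ * u k i := fun k i => by nlinarith [(hu k i).1]
  induction k with
  | zero => simp [hw0]
  | succ k ih =>
    have hsq : (ℓ * u k i) ^ 2 ≤ ℓ ^ 2 := by
      rw [mul_pow]
      exact mul_le_of_le_one_right (sq_nonneg ℓ)
        ((sq_le_one_iff_abs_le_one _).mpr (abs_le.mpr (hu k i)))
    have hpos := weight_pos (fun k i => by linarith [hstep k i]) hw0 hwsucc k i
    rw [hwsucc, log_mul (by linarith [hstep k i]) hpos.ne', sum_range_succ]
    push_cast
    linarith [Real.sub_sq_le_log_one_add_s11 (hstep k i)]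

variable [Fintype ι]

lemma sum_weight_succ (hwsucc : ∀ k i, w (k + 1) i = (1 + ℓ * u k i) * w k i)
    (hQ : ∀ k i, Q k i = w k i / ∑ j, w k j) {k : ℕ} (hW : ∑ i, w k i ≠ 0) :
    ∑ i, w (k + 1) i = (∑ i, w k i) * (1 + ℓ * ∑ i, Q k i * u k i) := by
  simp only [hwsucc, hQ, div_mul_eq_mul_div, ← sum_div]
  field_simp
  rw [mul_sum, ← sum_add_distrib]
  exact sum_congr rfl fun i _ => by ring

lemma sum_weight_le [Nonempty ι] (hwpos : ∀ k i, 0 < w k i) (hw0 : ∀ i, w 0 i = 1)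
    (hwsucc : ∀ k i, w (k + 1) i = (1 + ℓ * u k i) * w k i)
    (hQ : ∀ k i, Q k i = w k i / ∑ j, w k j) (k : ℕ) :
    ∑ i, w k i ≤ Fintype.card ι * exp (ℓ * ∑ j ∈ range k, ∑ i, Q j i * u j i) := by
  induction k with
  | zero => simp [hw0]
  | succ k ih =>
    have hW : 0 < ∑ i, w k i := sum_pos (fun i _ => hwpos k i) univ_nonempty
    set x := ℓ * ∑ i, Q k i * u k i
    calc ∑ i, w (k + 1) i = (∑ i, w k i) * (1 + x) := sum_weight_succ hwsucc hQ hW.ne'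
      _ ≤ (∑ i, w k i) * exp x := by gcongr; linarith [add_one_le_exp x]
      _ ≤ Fintype.card ι * exp (ℓ * ∑ j ∈ range k, ∑ i, Q j i * u j i) * exp x := by gcongr
      _ = _ := by rw [sum_range_succ, mul_add ℓ, exp_add, mul_assoc]

theorem regret_mul_le [Nonempty ι] (hℓ0 : 0 ≤ ℓ) (hℓ : ℓ ≤ 1 / 2)
    (hu : ∀ k i, u k i ∈ Set.Icc (-1 : ℝ) 1) (hw0 : ∀ i, w 0 i = 1)
    (hwsucc : ∀ k i, w (k + 1) i = (1 + ℓ * u k i) * w k i)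
    (hQ : ∀ k i, Q k i = w k i / ∑ j, w k j)
    {P : ι → ℝ} (hP0 : ∀ i, 0 ≤ P i) (hP1 : ∑ i, P i = 1) (K : ℕ) :
    ℓ * ((∑ k ∈ range K, ∑ i, P i * u k i) - ∑ k ∈ range K, ∑ i, Q k i * u k i)
      ≤ log (Fintype.card ι) + ℓ ^ 2 * K := by
  set q := ∑ k ∈ range K, ∑ i, Q k i * u k i
  have hwpos : ∀ k i, 0 < w k i :=
    weight_pos (fun k i => by nlinarith [(hu k i).1]) hw0 hwsucc
  have hexpert : ∀ i, ℓ * ∑ k ∈ range K, u k i ≤ log (Fintype.card ι) + ℓ * q + ℓ ^ 2 * K := by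
    intro i
    have hle : w K i ≤ Fintype.card ι * exp (ℓ * q) :=
      (single_le_sum (fun j _ => (hwpos K j).le) (mem_univ i)).trans
        (sum_weight_le hwpos hw0 hwsucc hQ K)
    have hlog := (log_le_log (hwpos K i) hle).trans_eq
      (by rw [log_mul (by positivity) (exp_pos _).ne', log_exp])
    linarith [mul_sum_sub_le_log_weight hℓ0 hℓ hu hw0 hwsucc K i]
  calc ℓ * ((∑ k ∈ range K, ∑ i, P i * u k i) - q)
      = ∑ i, P i * (ℓ * ∑ k ∈ range K, u k i) - ℓ * q := by
        rw [mul_sub, sum_comm, mul_sum]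
        simp only [mul_sum]
        congr 1
        exact sum_congr rfl fun i _ => sum_congr rfl fun k _ => by ring
    _ ≤ ∑ i, P i * (log (Fintype.card ι) + ℓ * q + ℓ ^ 2 * K) - ℓ * q := by
        gcongr with i
        exacts [hP0 i, hexpert i]
    _ = log (Fintype.card ι) + ℓ ^ 2 * K := by rw [← sum_mul, hP1]; ring

end MultiplicativeWeights

/-- Multiplicative weights run for `K` rounds with learning rate
`ℓ = √(ln N / K)` (with `K ≥ 4 ln N`, so `ℓ ≤ 1/2`) has regret against any fixed
distribution `P` bounded by `2√(K ln N)`. -/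
theorem stmt11 (N : ℕ) (hN : 1 ≤ N) (K : ℕ) (hK : 1 ≤ K)
    (hKN : 4 * Real.log N ≤ K)
    (ℓ : ℝ) (hℓ : ℓ = Real.sqrt (Real.log N / K)) (hℓ0 : 0 < ℓ)
    (u : ℕ → Fin N → ℝ) (hu : ∀ k i, u k i ∈ Set.Icc (-1 : ℝ) 1)
    (w : ℕ → Fin N → ℝ)
    (hw0 : ∀ i, w 0 i = 1)
    (hwsucc : ∀ k i, w (k + 1) i = (1 + ℓ * u k i) * w k i)
    (Q : ℕ → Fin N → ℝ) (hQ : ∀ k i, Q k i = w k i / ∑ j, w k j)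
    (P : Fin N → ℝ) (hP0 : ∀ i, 0 ≤ P i) (hP1 : ∑ i, P i = 1) :
    (∑ k ∈ Finset.range K, ∑ i, P i * u k i)
      - (∑ k ∈ Finset.range K, ∑ i, Q k i * u k i)
      ≤ 2 * Real.sqrt (K * Real.log N) := by
  have hK0 : (0 : ℝ) < K := by exact_mod_cast hK
  have hℓsq : ℓ ^ 2 * K = log N := by
    rw [hℓ, sq_sqrt (sqrt_pos.mp (hℓ ▸ hℓ0)).le, div_mul_cancel₀ _ hK0.ne']
  have hℓK : ℓ * K = √(K * log N) := by
    rw [← hℓsq, show (K : ℝ) * (ℓ ^ 2 * K) = (ℓ * K) ^ 2 by ring, sqrt_sq (by positivity)]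
  have hℓhalf : ℓ ≤ 1 / 2 := by
    have hsq : ℓ ^ 2 ≤ (1 / 2) ^ 2 := le_of_mul_le_mul_right (by linarith) hK0
    exact (pow_le_pow_iff_left₀ hℓ0.le (by norm_num) two_ne_zero).mp hsq
  have : Nonempty (Fin N) := ⟨⟨0, hN⟩⟩
  have hregret := MultiplicativeWeights.regret_mul_le hℓ0.le hℓhalf hu hw0 hwsucc hQ hP0 hP1 K
  rw [Fintype.card_fin, ← hℓsq] at hregret
  rw [← hℓK]
  refine le_of_mul_le_mul_left ?_ hℓ0
  linarith
end

section
/- If two MDPs μ, μ' on the same finite state space share a policy π inducing transition matrices P, P' with ‖P − P'‖_∞ ≤ ε and reward vectors ρ, ρ' with ‖ρ − ρ'‖_∞ ≤ ε, and both rewards are bounded by 1 in sup norm, then ‖(I−γP)^{-1}ρ − (I−γP')^{-1}ρ'‖_∞ ≤ ε/(1−γ) + γε/(1−γ)² ≤ 2ε/(1−γ)². -/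
/-!
With `A = 1 - γ • P` and `B = 1 - γ • P'`, the resolvent identity
`A⁻¹ - B⁻¹ = A⁻¹ (B - A) B⁻¹ = γ • A⁻¹ (P - P') B⁻¹` splits the difference of the two value
functions as `A⁻¹ (ρ - ρ') + γ • A⁻¹ (P - P') B⁻¹ ρ'`. A row-stochastic matrix has
`ℓ∞`-operator norm at most `1`, so the Neumann series bounds `‖A⁻¹‖` and `‖B⁻¹‖` by `1 / (1 - γ)`,
and the two terms are at most `ε / (1 - γ)` and `γ ε / (1 - γ) ^ 2`.
-/

open Matrix

attribute [local instance] Matrix.linftyOpNormedRing Matrix.linftyOpNormedAlgebra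

theorem norm_inverse_one_sub_le {R : Type*} [NormedRing R] [HasSummableGeomSeries R]
    (h1 : ‖(1 : R)‖ ≤ 1) {x : R} (hx : ‖x‖ < 1) : ‖Ring.inverse (1 - x)‖ ≤ (1 - ‖x‖)⁻¹ := by
  rw [← geom_series_eq_inverse x hx]
  linarith [tsum_geometric_le_of_norm_lt_one x hx]

namespace Matrix

variable {n : Type*} [Fintype n] [DecidableEq n]

theorem linfty_opNorm_le_one_of_mem_rowStochastic {M : Matrix n n ℝ}
    (hM : M ∈ rowStochastic ℝ n) : ‖M‖ ≤ 1 := by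
  have hrow (i : n) : ∑ j, ‖M i j‖₊ = 1 := NNReal.coe_injective <| by
    push_cast
    simp only [Real.norm_of_nonneg (nonneg_of_mem_rowStochastic hM),
      sum_row_of_mem_rowStochastic hM i]
  have : ‖M‖₊ ≤ 1 := by
    rw [linfty_opNNNorm_def]
    exact Finset.sup_le fun i _ => (hrow i).le
  exact_mod_cast this

variable {P : Matrix n n ℝ} {γ : ℝ}

theorem norm_smul_le_of_mem_rowStochastic (hP : P ∈ rowStochastic ℝ n) (hγ0 : 0 ≤ γ) :
    ‖γ • P‖ ≤ γ := by
  rw [norm_smul, Real.norm_of_nonneg hγ0]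
  exact mul_le_of_le_one_right hγ0 (linfty_opNorm_le_one_of_mem_rowStochastic hP)

theorem isUnit_one_sub_smul_of_mem_rowStochastic (hP : P ∈ rowStochastic ℝ n) (hγ0 : 0 ≤ γ)
    (hγ1 : γ < 1) : IsUnit (1 - γ • P) :=
  isUnit_one_sub_of_norm_lt_one ((norm_smul_le_of_mem_rowStochastic hP hγ0).trans_lt hγ1)

theorem norm_inv_one_sub_smul_le_of_mem_rowStochastic (hP : P ∈ rowStochastic ℝ n)
    (hγ0 : 0 ≤ γ) (hγ1 : γ < 1) : ‖(1 - γ • P)⁻¹‖ ≤ (1 - γ)⁻¹ := by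
  have hγP := norm_smul_le_of_mem_rowStochastic hP hγ0
  rw [nonsing_inv_eq_ringInverse]
  refine (norm_inverse_one_sub_le ?_ (hγP.trans_lt hγ1)).trans ?_
  · exact linfty_opNorm_le_one_of_mem_rowStochastic (one_mem _)
  · exact inv_anti₀ (by linarith) (by linarith)

theorem norm_inv_one_sub_smul_mulVec_sub_le {P P' : Matrix n n ℝ} (hP : P ∈ rowStochastic ℝ n)
    (hP' : P' ∈ rowStochastic ℝ n) (hγ0 : 0 ≤ γ) (hγ1 : γ < 1) (ρ ρ' : n → ℝ) :
    ‖(1 - γ • P)⁻¹ *ᵥ ρ - (1 - γ • P')⁻¹ *ᵥ ρ'‖ ≤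
      ‖ρ - ρ'‖ / (1 - γ) + γ * ‖P - P'‖ * ‖ρ'‖ / (1 - γ) ^ 2 := by
  set A := 1 - γ • P
  set B := 1 - γ • P'
  have hA := norm_inv_one_sub_smul_le_of_mem_rowStochastic hP hγ0 hγ1
  have hB := norm_inv_one_sub_smul_le_of_mem_rowStochastic hP' hγ0 hγ1
  have hinv : A⁻¹ - B⁻¹ = γ • (A⁻¹ * (P - P') * B⁻¹) := by
    have hunits : IsUnit A ↔ IsUnit B :=
      iff_of_true (isUnit_one_sub_smul_of_mem_rowStochastic hP hγ0 hγ1)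
        (isUnit_one_sub_smul_of_mem_rowStochastic hP' hγ0 hγ1)
    rw [inv_sub_inv hunits, show B - A = γ • (P - P') by simp only [A, B, smul_sub]; abel,
      mul_smul_comm, smul_mul_assoc]
  have hsplit : A⁻¹ *ᵥ ρ - B⁻¹ *ᵥ ρ' = A⁻¹ *ᵥ (ρ - ρ') + (A⁻¹ - B⁻¹) *ᵥ ρ' := by
    rw [mulVec_sub, sub_mulVec]
    abel
  have h1γ : 0 < 1 - γ := by linarith
  calc ‖A⁻¹ *ᵥ ρ - B⁻¹ *ᵥ ρ'‖
      ≤ ‖A⁻¹‖ * ‖ρ - ρ'‖ + γ * (‖A⁻¹‖ * ‖P - P'‖ * ‖B⁻¹‖) * ‖ρ'‖ := by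
        rw [hsplit, hinv]
        refine (norm_add_le _ _).trans (add_le_add (linfty_opNorm_mulVec _ _) ?_)
        refine (linfty_opNorm_mulVec _ _).trans (mul_le_mul_of_nonneg_right ?_ (norm_nonneg _))
        rw [norm_smul, Real.norm_of_nonneg hγ0]
        exact mul_le_mul_of_nonneg_left (norm_mul₃_le ..) hγ0
    _ ≤ (1 - γ)⁻¹ * ‖ρ - ρ'‖ + γ * ((1 - γ)⁻¹ * ‖P - P'‖ * (1 - γ)⁻¹) * ‖ρ'‖ := by
        gcongr
    _ = ‖ρ - ρ'‖ / (1 - γ) + γ * ‖P - P'‖ * ‖ρ'‖ / (1 - γ) ^ 2 := by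
        field_simp

end Matrix

theorem stmt14_general (n : ℕ) (P P' : Matrix (Fin n) (Fin n) ℝ)
    (hpos : ∀ i j, 0 ≤ P i j) (hrow : ∀ i, ∑ j, P i j = 1)
    (hpos' : ∀ i j, 0 ≤ P' i j) (hrow' : ∀ i, ∑ j, P' i j = 1)
    (γ : ℝ) (hγ0 : 0 ≤ γ) (hγ1 : γ < 1)
    (ρ ρ' : Fin n → ℝ) (hρ' : ‖ρ'‖ ≤ 1)
    (ε : ℝ) (hPP : ‖P - P'‖ ≤ ε) (hρρ : ‖ρ - ρ'‖ ≤ ε) :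
    ‖(1 - γ • P)⁻¹ *ᵥ ρ - (1 - γ • P')⁻¹ *ᵥ ρ'‖ ≤ ε / (1 - γ) + γ * ε / (1 - γ) ^ 2 ∧
      ε / (1 - γ) + γ * ε / (1 - γ) ^ 2 ≤ 2 * ε / (1 - γ) ^ 2 := by
  have hP : P ∈ rowStochastic ℝ (Fin n) := mem_rowStochastic_iff_sum.2 ⟨hpos, hrow⟩
  have hP' : P' ∈ rowStochastic ℝ (Fin n) := mem_rowStochastic_iff_sum.2 ⟨hpos', hrow'⟩
  have h1γ : 0 < 1 - γ := by linarith
  have hε : 0 ≤ ε := (norm_nonneg _).trans hPP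
  have hPρ : ‖P - P'‖ * ‖ρ'‖ ≤ ε := (mul_le_of_le_one_right (norm_nonneg _) hρ').trans hPP
  refine ⟨(norm_inv_one_sub_smul_mulVec_sub_le hP hP' hγ0 hγ1 ρ ρ').trans ?_, ?_⟩
  · rw [mul_assoc]
    gcongr
  · have hmiddle : ε / (1 - γ) + γ * ε / (1 - γ) ^ 2 = ε / (1 - γ) ^ 2 := by
      field_simp
      ring
    rw [hmiddle]
    gcongr
    linarith

/-- If two MDPs share a policy inducing row-stochastic matrices `P, P'` with
`‖P − P'‖_∞ ≤ ε`, reward vectors `ρ, ρ'` with `‖ρ − ρ'‖_∞ ≤ ε` and both bounded by 1 in sup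
norm, then `‖(I−γP)⁻¹ρ − (I−γP')⁻¹ρ'‖_∞ ≤ ε/(1−γ) + γε/(1−γ)² ≤ 2ε/(1−γ)²`. -/
theorem stmt14 (n : ℕ) (P P' : Matrix (Fin n) (Fin n) ℝ)
    (hpos : ∀ i j, 0 ≤ P i j) (hrow : ∀ i, ∑ j, P i j = 1)
    (hpos' : ∀ i j, 0 ≤ P' i j) (hrow' : ∀ i, ∑ j, P' i j = 1)
    (γ : ℝ) (hγ0 : 0 ≤ γ) (hγ1 : γ < 1)
    (ρ ρ' : Fin n → ℝ) (hρ : ‖ρ‖ ≤ 1) (hρ' : ‖ρ'‖ ≤ 1)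
    (ε : ℝ) (hε : 0 ≤ ε) (hPP : ‖P - P'‖ ≤ ε) (hρρ : ‖ρ - ρ'‖ ≤ ε) :
    ‖(1 - γ • P)⁻¹ *ᵥ ρ - (1 - γ • P')⁻¹ *ᵥ ρ'‖ ≤ ε / (1 - γ) + γ * ε / (1 - γ) ^ 2 ∧
      ε / (1 - γ) + γ * ε / (1 - γ) ^ 2 ≤ 2 * ε / (1 - γ) ^ 2 :=
  stmt14_general n P P' hpos hrow hpos' hrow' γ hγ0 hγ1 ρ ρ' hρ' ε hPP hρρ
end

section
/- For the multiplicative weights algorithm with rewards in [-1,1] and 0 < ℓ ≤ 1/2, for each expert j the final weight satisfies w_{j,K+1} ≥ exp(ℓ ∑_{k : u_{j,k} ≥ 0} u_{j,k} − ℓ² ∑_{k : u_{j,k} ≥ 0} u_{j,k}²) · exp(−ℓ ∑_{k : u_{j,k} < 0} |u_{j,k}| − ℓ² ∑_{k : u_{j,k} < 0} u_{j,k}²), using (1+ℓ)^x ≤ 1+ℓx for x ∈ [0,1] and (1−ℓ)^x ≤ 1−ℓx for x ∈ [0,1]. -/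
open Finset

lemma key_log {x : ℝ} (hx : |x| ≤ 1/2) : x - x^2 ≤ Real.log (1 + x) := by
  have h1 : |(-x)| < 1 := by rw [abs_neg]; linarith
  have h := Real.abs_log_sub_add_sum_range_le h1 5
  rw [show (1 : ℝ) - (-x) = 1 + x by ring] at h
  have hs : (∑ i ∈ range 5, (-x) ^ (i + 1) / (i + 1))
      = -x + x^2/2 - x^3/3 + x^4/4 - x^5/5 := by
    simp [Finset.sum_range_succ]; ring
  rw [hs] at h
  have hxa : |(-x)| ^ 6 = x ^ 6 := by
    rw [abs_neg, ← abs_pow, abs_of_nonneg (by positivity)]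
  have hden : (1 : ℝ) - |(-x)| ≥ 1/2 := by rw [abs_neg]; linarith
  have hx6 : (0:ℝ) ≤ x ^ 6 := by positivity
  have hb : |(-x)| ^ 6 / (1 - |(-x)|) ≤ 2 * x ^ 6 := by
    rw [hxa, div_le_iff₀ (by linarith)]
    nlinarith [mul_nonneg hx6 (by linarith : (0:ℝ) ≤ 2 * (1 - |(-x)|) - 1)]
  have h2 := (abs_le.mp (h.trans hb)).1
  obtain ⟨hl, hr⟩ := abs_le.mp hx
  have h3 : (0:ℝ) ≤ x + 1/2 := by linarith
  have h4 : (0:ℝ) ≤ 1/2 - x := by linarith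
  nlinarith [mul_nonneg (mul_nonneg h3 h4) (sq_nonneg x),
    mul_nonneg (mul_nonneg h3 h4) (sq_nonneg (x^2)),
    mul_nonneg h3 (sq_nonneg x), mul_nonneg h4 (sq_nonneg x),
    mul_nonneg (mul_nonneg h3 h4) (mul_nonneg (sq_nonneg x) (sq_nonneg x)),
    sq_nonneg x, sq_nonneg (x^2)]

lemma key_exp {x : ℝ} (hx : |x| ≤ 1/2) : Real.exp (x - x^2) ≤ 1 + x := by
  have hpos : (0:ℝ) < 1 + x := by have := (abs_le.mp hx).1; linarith
  calc Real.exp (x - x^2) ≤ Real.exp (Real.log (1+x)) := Real.exp_le_exp.mpr (key_log hx)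
    _ = 1 + x := Real.exp_log hpos

/-- For multiplicative weights with rewards in `[-1,1]` and `0 < ℓ ≤ 1/2`,
each expert `j`'s final weight satisfies
`w_{j,K+1} ≥ exp(ℓ ∑_{k : u_{j,k} ≥ 0} u_{j,k} − ℓ² ∑_{k : u_{j,k} ≥ 0} u_{j,k}²) ·
exp(−ℓ ∑_{k : u_{j,k} < 0} |u_{j,k}| − ℓ² ∑_{k : u_{j,k} < 0} u_{j,k}²)`. -/
theorem stmt17 (N : ℕ) (hN : 1 ≤ N) (ℓ : ℝ) (hℓ0 : 0 < ℓ) (hℓ : ℓ ≤ 1 / 2)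
    (u : ℕ → Fin N → ℝ) (hu : ∀ k i, u k i ∈ Set.Icc (-1 : ℝ) 1)
    (w : ℕ → Fin N → ℝ)
    (hw0 : ∀ i, w 0 i = 1)
    (hwsucc : ∀ k i, w (k + 1) i = (1 + ℓ * u k i) * w k i)
    (K : ℕ) (j : Fin N) :
    w K j ≥
      Real.exp (ℓ * (∑ k ∈ (Finset.range K).filter (fun k => 0 ≤ u k j), u k j)
          - ℓ ^ 2 * (∑ k ∈ (Finset.range K).filter (fun k => 0 ≤ u k j), u k j ^ 2)) *
      Real.exp (-ℓ * (∑ k ∈ (Finset.range K).filter (fun k => u k j < 0), |u k j|)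
          - ℓ ^ 2 * (∑ k ∈ (Finset.range K).filter (fun k => u k j < 0), u k j ^ 2)) := by
  have habs : ∑ k ∈ (Finset.range K).filter (fun k => u k j < 0), |u k j|
      = -∑ k ∈ (Finset.range K).filter (fun k => u k j < 0), u k j := by
    rw [← Finset.sum_neg_distrib]
    refine Finset.sum_congr rfl fun k hk => ?_
    exact abs_of_neg (Finset.mem_filter.mp hk).2
  rw [habs, ← Real.exp_add]
  set f : ℕ → ℝ := fun k => ℓ * u k j - ℓ^2 * u k j ^ 2 with hf
  have hfilter : (Finset.range K).filter (fun k => u k j < 0)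
      = (Finset.range K).filter (fun k => ¬ 0 ≤ u k j) := by
    apply Finset.filter_congr; intro k _; simp [not_le]
  have hEq : ℓ * (∑ k ∈ (Finset.range K).filter (fun k => 0 ≤ u k j), u k j)
          - ℓ ^ 2 * (∑ k ∈ (Finset.range K).filter (fun k => 0 ≤ u k j), u k j ^ 2)
      + (-ℓ * -∑ k ∈ (Finset.range K).filter (fun k => u k j < 0), u k j
          - ℓ ^ 2 * (∑ k ∈ (Finset.range K).filter (fun k => u k j < 0), u k j ^ 2))
      = ∑ k ∈ Finset.range K, f k := by
    rw [hfilter]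
    rw [← Finset.sum_filter_add_sum_filter_not (Finset.range K) (fun k => 0 ≤ u k j) f]
    simp only [hf, Finset.sum_sub_distrib, ← Finset.mul_sum]
    ring
  rw [hEq]
  clear hEq hfilter habs
  induction K with
  | zero => simp [hw0 j]
  | succ K ih =>
    have hpos : 0 < w K j := lt_of_lt_of_le (Real.exp_pos _) ih
    rw [hwsucc K j, Finset.sum_range_succ, Real.exp_add]
    have hx : |ℓ * u K j| ≤ 1/2 := by
      rw [abs_mul, abs_of_pos hℓ0]
      have h1 : |u K j| ≤ 1 := abs_le.mpr ⟨(hu K j).1, (hu K j).2⟩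
      calc ℓ * |u K j| ≤ ℓ * 1 := by nlinarith
        _ ≤ 1/2 := by linarith
    have hkey : Real.exp (f K) ≤ 1 + ℓ * u K j := by
      have := key_exp hx
      have heq : ℓ * u K j - (ℓ * u K j)^2 = f K := by simp [hf]; ring
      rwa [heq] at this
    calc Real.exp (∑ k ∈ Finset.range K, f k) * Real.exp (f K)
        ≤ w K j * (1 + ℓ * u K j) :=
          mul_le_mul ih hkey (Real.exp_pos _).le hpos.le
      _ = (1 + ℓ * u K j) * w K j := by ring
end
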